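/- The function t ↦ log Φ(t), where Φ is the standard normal cumulative distribution function, is strictly concave on ℝ; equivalently its second derivative −φ(t)(φ(t) + tΦ(t))/Φ(t)² is strictly negative for every t ∈ ℝ. -/

import Mathlib

open MeasureTheory ProbabilityTheory

/-- The cumulative distribution function of the standard normal distribution. -/
noncomputable def stdNormCDF (t : ℝ) : ℝ := ((gaussianReal 0 1) (Set.Iic t)).toReal

/-- The probability density function of the standard normal distribution. -/
noncomputable def stdNormPDF (t : ℝ) : ℝ := gaussianPDFReal 0 1 t

open Real Filter Set

lemma stdNormPDF_eq (x : ℝ) :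
    stdNormPDF x = (Real.sqrt (2 * π))⁻¹ * Real.exp (-x ^ 2 / 2) := by
  simp [stdNormPDF, gaussianPDFReal]

lemma stdNormPDF_pos (x : ℝ) : 0 < stdNormPDF x :=
  gaussianPDFReal_pos 0 1 x one_ne_zero

lemma stdNormPDF_integrable : Integrable stdNormPDF :=
  integrable_gaussianPDFReal 0 1

lemma stdNormPDF_continuous : Continuous stdNormPDF := by
  have h : stdNormPDF = fun x => (Real.sqrt (2 * π))⁻¹ * Real.exp (-x ^ 2 / 2) :=
    funext stdNormPDF_eq
  rw [h]; fun_prop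

lemma id_mul_stdNormPDF_integrable : Integrable (fun x => x * stdNormPDF x) := by
  have h := (integrable_mul_exp_neg_mul_sq (b := (1:ℝ)/2) (by norm_num)).const_mul
    ((Real.sqrt (2 * π))⁻¹)
  refine h.congr (Filter.Eventually.of_forall fun x => ?_)
  show (Real.sqrt (2 * π))⁻¹ * (x * Real.exp (-(1/2 : ℝ) * x ^ 2)) = x * stdNormPDF x
  rw [stdNormPDF_eq, show -(1/2 : ℝ) * x ^ 2 = -x ^ 2 / 2 by ring]
  ring

lemma stdNormCDF_eq (t : ℝ) : stdNormCDF t = ∫ x in Iic t, stdNormPDF x := by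
  rw [stdNormCDF, gaussianReal_apply_eq_integral 0 one_ne_zero,
    ENNReal.toReal_ofReal]
  · rfl
  · exact setIntegral_nonneg measurableSet_Iic fun x _ => gaussianPDFReal_nonneg 0 1 x

lemma stdNormCDF_pos (t : ℝ) : 0 < stdNormCDF t := by
  rw [stdNormCDF_eq]
  rw [setIntegral_pos_iff_support_of_nonneg_ae
    (Filter.Eventually.of_forall (fun x => (stdNormPDF_pos x).le))
    stdNormPDF_integrable.integrableOn]
  have : Function.support stdNormPDF = Set.univ := by
    ext x; simp [(stdNormPDF_pos x).ne']
  rw [this, Set.univ_inter, Real.volume_Iic]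
  simp

lemma stdNormPDF_hasDerivAt (x : ℝ) :
    HasDerivAt stdNormPDF (-x * stdNormPDF x) x := by
  have h1 : HasDerivAt (fun y : ℝ => -y ^ 2 / 2) (-x) x := by
    have := ((hasDerivAt_pow 2 x).neg).div_const 2
    simpa using this.congr_deriv (by ring)
  have h2 := (h1.exp.const_mul ((Real.sqrt (2 * π))⁻¹))
  have : HasDerivAt (fun y : ℝ => (Real.sqrt (2 * π))⁻¹ * Real.exp (-y ^ 2 / 2))
      (-x * ((Real.sqrt (2 * π))⁻¹ * Real.exp (-x ^ 2 / 2))) x := by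
    exact h2.congr_deriv (by ring)
  simpa only [← stdNormPDF_eq] using this.congr_deriv (by rw [stdNormPDF_eq])

lemma stdNormPDF_tendsto_atBot : Tendsto stdNormPDF atBot (nhds 0) := by
  have h1 : Tendsto (fun x : ℝ => -x ^ 2 / 2) atBot atBot := by
    apply Tendsto.atBot_div_const (by norm_num)
    apply tendsto_neg_atTop_atBot.comp
    have : Tendsto (fun x : ℝ => (-x) ^ 2) atBot atTop :=
      (tendsto_pow_atTop two_ne_zero).comp tendsto_neg_atBot_atTop
    simpa using this
  have := (Real.tendsto_exp_atBot.comp h1).const_mul ((Real.sqrt (2 * π))⁻¹)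
  simp only [mul_zero] at this
  refine this.congr (fun x => ?_)
  rw [stdNormPDF_eq]; rfl

lemma integral_id_mul_stdNormPDF (t : ℝ) :
    ∫ x in Iic t, x * stdNormPDF x = -stdNormPDF t := by
  have h : ∫ x in Iic t, x * stdNormPDF x = -stdNormPDF t - 0 := by
    refine integral_Iic_of_hasDerivAt_of_tendsto
      (f := fun x => -stdNormPDF x) ?_ (fun x _ => ?_) ?_ ?_
    · exact (stdNormPDF_continuous.neg.continuousAt).continuousWithinAt
    · exact (stdNormPDF_hasDerivAt x).neg.congr_deriv (by ring)
    · exact id_mul_stdNormPDF_integrable.integrableOn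
    · simpa using stdNormPDF_tendsto_atBot.neg
  simpa using h

lemma mills (t : ℝ) : 0 < stdNormPDF t + t * stdNormCDF t := by
  rcases le_or_gt 0 t with ht | ht
  · have := stdNormPDF_pos t
    have := mul_nonneg ht (stdNormCDF_pos t).le
    linarith
  · -- t < 0
    have key : stdNormCDF t < ∫ x in Iic t, (x / t) * stdNormPDF x := by
      rw [stdNormCDF_eq]
      have hpos : 0 < ∫ x in Iic t, ((x / t) * stdNormPDF x - stdNormPDF x) := by
        rw [setIntegral_pos_iff_support_of_nonneg_ae]
        · refine lt_of_lt_of_le ?_ (measure_mono (?_ : Iio t ⊆ _))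
          · rw [Real.volume_Iio]; simp
          · intro x hx
            refine ⟨?_, Set.mem_Iic.mpr (Set.mem_Iio.mp hx).le⟩
            have h1 : (1 : ℝ) < x / t := by
              rw [lt_div_iff_of_neg ht]; simpa using hx
            have : 0 < (x / t) * stdNormPDF x - stdNormPDF x := by
              nlinarith [stdNormPDF_pos x]
            simpa [Function.mem_support] using this.ne'
        · refine (ae_restrict_iff' measurableSet_Iic).2 (Filter.Eventually.of_forall
            (fun x hx => ?_))
          have h1 : (1 : ℝ) ≤ x / t := by
            rw [le_div_iff_of_neg ht]; simpa using hx
          show (0:ℝ) ≤ x / t * stdNormPDF x - stdNormPDF x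
          nlinarith [stdNormPDF_pos x]
        · refine Integrable.integrableOn (Integrable.sub ?_ stdNormPDF_integrable)
          refine (id_mul_stdNormPDF_integrable.const_mul t⁻¹).congr
            (Filter.Eventually.of_forall fun x => ?_)
          ring
      have hint : IntegrableOn (fun x => (x / t) * stdNormPDF x) (Iic t) := by
        refine Integrable.integrableOn ?_
        refine (id_mul_stdNormPDF_integrable.const_mul t⁻¹).congr
          (Filter.Eventually.of_forall fun x => ?_)
        ring
      have := integral_sub hint stdNormPDF_integrable.integrableOn
      rw [this] at hpos
      linarith
    have hval : ∫ x in Iic t, (x / t) * stdNormPDF x = -stdNormPDF t / t := by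
      have : ∫ x in Iic t, (x / t) * stdNormPDF x
          = t⁻¹ * ∫ x in Iic t, x * stdNormPDF x := by
        rw [← integral_const_mul]
        congr 1; ext x; ring
      rw [this, integral_id_mul_stdNormPDF]
      field_simp
    rw [hval] at key
    have h2 : (-stdNormPDF t / t) * t = -stdNormPDF t :=
      div_mul_cancel₀ _ ht.ne
    have h3 := mul_lt_mul_of_neg_right key ht
    rw [h2] at h3
    have h4 : -stdNormPDF t < t * stdNormCDF t := by rw [mul_comm]; exact h3
    linarith

lemma stdNormCDF_hasDerivAt (t : ℝ) :
    HasDerivAt stdNormCDF (stdNormPDF t) t := by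
  have hrepr : ∀ u : ℝ, stdNormCDF u
      = stdNormCDF 0 + ∫ x in (0:ℝ)..u, stdNormPDF x := by
    intro u
    rw [stdNormCDF_eq, stdNormCDF_eq,
      ← intervalIntegral.integral_Iic_sub_Iic stdNormPDF_integrable.integrableOn
        stdNormPDF_integrable.integrableOn]
    ring
  have hd : HasDerivAt (fun u => stdNormCDF 0 + ∫ x in (0:ℝ)..u, stdNormPDF x)
      (stdNormPDF t) t := by
    refine (HasDerivAt.const_add _ ?_)
    exact intervalIntegral.integral_hasDerivAt_right
      stdNormPDF_integrable.intervalIntegrable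
      stdNormPDF_continuous.aestronglyMeasurable.stronglyMeasurableAtFilter
      stdNormPDF_continuous.continuousAt
  exact hd.congr_of_eventuallyEq (Filter.Eventually.of_forall hrepr)

lemma log_stdNormCDF_hasDerivAt (t : ℝ) :
    HasDerivAt (fun s => Real.log (stdNormCDF s)) (stdNormPDF t / stdNormCDF t) t :=
  (stdNormCDF_hasDerivAt t).log (stdNormCDF_pos t).ne'

lemma deriv_log_stdNormCDF :
    deriv (fun s => Real.log (stdNormCDF s)) = fun t => stdNormPDF t / stdNormCDF t := by
  ext t
  exact (log_stdNormCDF_hasDerivAt t).deriv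

lemma deriv2_log_stdNormCDF (t : ℝ) :
    deriv (deriv (fun s => Real.log (stdNormCDF s))) t
      = -(stdNormPDF t * (stdNormPDF t + t * stdNormCDF t)) / (stdNormCDF t) ^ 2 := by
  rw [deriv_log_stdNormCDF]
  have hd : HasDerivAt (fun t => stdNormPDF t / stdNormCDF t)
      ((-t * stdNormPDF t * stdNormCDF t - stdNormPDF t * stdNormPDF t)
        / (stdNormCDF t) ^ 2) t :=
    (stdNormPDF_hasDerivAt t).div (stdNormCDF_hasDerivAt t) (stdNormCDF_pos t).ne'
  rw [hd.deriv]
  ring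

/-- The function `t ↦ log Φ(t)` is strictly concave on `ℝ`; equivalently its second
derivative `−φ(t)(φ(t) + tΦ(t))/Φ(t)²` is strictly negative for every `t ∈ ℝ`. -/
theorem log_stdNormCDF_strictConcave :
    StrictConcaveOn ℝ Set.univ (fun t => Real.log (stdNormCDF t))
      ∧ ∀ t : ℝ,
        deriv (deriv (fun s => Real.log (stdNormCDF s))) t
            = -(stdNormPDF t * (stdNormPDF t + t * stdNormCDF t)) / (stdNormCDF t) ^ 2
          ∧ -(stdNormPDF t * (stdNormPDF t + t * stdNormCDF t)) / (stdNormCDF t) ^ 2 < 0 := by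
  have hneg : ∀ t : ℝ,
      -(stdNormPDF t * (stdNormPDF t + t * stdNormCDF t)) / (stdNormCDF t) ^ 2 < 0 := by
    intro t
    apply div_neg_of_neg_of_pos
    · have := mills t
      have := stdNormPDF_pos t
      nlinarith
    · exact pow_pos (stdNormCDF_pos t) 2
  refine ⟨?_, fun t => ⟨deriv2_log_stdNormCDF t, hneg t⟩⟩
  apply strictConcaveOn_of_deriv2_neg convex_univ
  · exact Continuous.continuousOn (by
      exact continuous_iff_continuousAt.2 fun t =>
        (log_stdNormCDF_hasDerivAt t).continuousAt)
  · intro t _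
    have : deriv^[2] (fun s => Real.log (stdNormCDF s)) t
        = deriv (deriv (fun s => Real.log (stdNormCDF s))) t := by
      simp [Function.iterate_succ, Function.comp]
    rw [this, deriv2_log_stdNormCDF t]
    exact hneg t
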